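/- Let K be a field of characteristic 0, p ≥ 3 odd, d, R ∈ K nonzero with √R ∉ K and (Z^p − d)² − R irreducible over K; set D = d² − R and h = Z^p − d − √R. Let z be any p-th root of D and u a root of the polynomial f (of degree p as in the paper). Then there exists a unique root y of h such that, setting y' = z/y, one has u = z^((p−1)/2)·(y + y'). Equivalently, the map y ↦ z^((p−1)/2)(y + z/y) is a bijection from the set of roots of h onto the set of roots of f. -/

import Mathlib

open Polynomial Finset

/-- The coefficient `c_{2k+1}` of the paper. -/
def cOdd (p k : ℕ) : ℚ :=
  (-1) ^ ((p - 1) / 2 - k) * ((p : ℚ) / (((p + 1) / 2 + k : ℕ) : ℚ)) *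
    (Nat.choose ((p + 1) / 2 + k) (2 * k + 1) : ℚ)

/-!
Write `p = 2q + 1` and `u = z^q x`. The `c_{2k+1}` are the coefficients of the Dickson polynomial
`D_p(X, a) = ∑ (-1)^j p/(p-j) C(p-j, j) a^j X^(p-2j)`, and `f(u) = 0` says exactly `D_p(x, z) = 2d`
once `d² - R = z^p` is substituted. If `y + z/y = x`, then `D_p(x, z) = y^p + (z/y)^p` while
`y^p (z/y)^p = z^p = d² - R`, so `y^p` and `(z/y)^p` are the two roots `d ± √R` of
`T² - 2dT + d² - R`. The two solutions `y`, `z/y` of `y + z/y = x` thus have distinct `p`-th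
powers, and exactly one of them lies above `d + √R`.
-/

theorem Nat.choose_succ_sub_succ (n j : ℕ) :
    (n + 1 - j).choose (j + 1) = (n - j).choose j + (n - j).choose (j + 1) := by
  rcases le_or_gt j n with h | h
  · rw [Nat.sub_add_comm h, Nat.choose_succ_succ']
  · rw [Nat.sub_eq_zero_of_le h, Nat.sub_eq_zero_of_le h.le]
    simp [Nat.choose_eq_zero_of_lt, Nat.pos_of_ne_zero, show j ≠ 0 by omega]

namespace Polynomial

variable {R : Type*} [CommRing R]

theorem dickson_one_eval_add (y w : R) :
    ∀ n, (dickson 1 (y * w) n).eval (y + w) = y ^ n + w ^ n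
  | 0 => by norm_num
  | 1 => by simp
  | n + 2 => by
    simp only [dickson_add_two, eval_sub, eval_mul, eval_X, eval_C,
      dickson_one_eval_add y w n, dickson_one_eval_add y w (n + 1)]
    ring

theorem dickson_one_add_one (a : R) :
    ∀ n, dickson 1 a (n + 1) = 2 * dickson 2 a (n + 1) - X * dickson 2 a n
  | 0 => by rw [dickson_zero, dickson_one, dickson_one]; ring
  | 1 => by rw [dickson_two, dickson_two, dickson_one]; ring
  | n + 2 => by
    linear_combination dickson_add_two 1 a (n + 1) + X * dickson_one_add_one a (n + 1)
      - C a * dickson_one_add_one a n - 2 * dickson_add_two 2 a (n + 1)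
      + X * dickson_add_two 2 a n

theorem dickson_two_eval (a x : R) : ∀ {n N : ℕ}, n < 2 * N →
    (dickson 2 a n).eval x =
      ∑ j ∈ range N, (-1) ^ j * ((n - j).choose j : R) * a ^ j * x ^ (n - 2 * j)
  | 0, M + 1, _ => by norm_num [sum_range_succ']
  | 1, M + 1, _ => by simp [sum_range_succ']
  | n + 2, M + 1, h => by
    rw [dickson_add_two, eval_sub, eval_mul, eval_mul, eval_X, eval_C,
      dickson_two_eval a x (n := n + 1) (N := M + 1) (by omega),
      dickson_two_eval a x (n := n) (N := M) (by omega),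
      sum_range_succ', sum_range_succ', mul_add, mul_sum, mul_sum, add_sub_right_comm,
      ← sum_sub_distrib]
    congr 1
    · refine sum_congr rfl fun j _ => ?_
      have hpow : ((n - j).choose (j + 1) : R) * (x * x ^ (n + 1 - 2 * (j + 1)))
          = (n - j).choose (j + 1) * x ^ (n - 2 * j) := by
        rcases lt_or_ge n (2 * j + 1) with hn | hn
        · rw [Nat.choose_eq_zero_of_lt (by omega), Nat.cast_zero, zero_mul, zero_mul]
        · rw [← pow_succ', show n + 1 - 2 * (j + 1) + 1 = n - 2 * j by omega]
      rw [show n + 2 - (j + 1) = n + 1 - j by omega, show n + 1 - (j + 1) = n - j by omega,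
        show n + 2 - 2 * (j + 1) = n - 2 * j by omega, Nat.choose_succ_sub_succ, Nat.cast_add]
      linear_combination (-1) ^ (j + 1) * a ^ (j + 1) * hpow
    · simp only [pow_zero, mul_zero, tsub_zero, Nat.choose_zero_right, Nat.cast_one, mul_one,
        one_mul]
      ring

end Polynomial

-- `n/(n-j) C(n-j, j) = 2 C(n-j, j) - C(n-1-j, j)` at `n = 2q+1`, `j = q-k`.
theorem cOdd_eq {q k : ℕ} (hk : k ≤ q) :
    cOdd (2 * q + 1) k =
      (-1) ^ (q - k) * (2 * (q + 1 + k).choose (q - k) - (q + k).choose (q - k)) := by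
  have hchoose := Nat.choose_mul_succ_eq (q + k) (q - k)
  rw [show q + k + 1 - (q - k) = 2 * k + 1 by omega] at hchoose
  have hcast : ((q + k).choose (q - k) : ℚ) * (q + k + 1)
      = (q + k + 1).choose (q - k) * (2 * k + 1) := by
    exact_mod_cast hchoose
  rw [cOdd, show (2 * q + 1 - 1) / 2 = q by omega,
    show (2 * q + 1 + 1) / 2 + k = q + 1 + k by omega,
    Nat.choose_symm_of_eq_add (show q + 1 + k = 2 * k + 1 + (q - k) by omega),
    show q + 1 + k = q + k + 1 by ring]
  field_simp
  push_cast
  linear_combination hcast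

theorem dickson_one_eval_two_mul_add_one {F : Type*} [Field F] [CharZero F] (a x : F) (q : ℕ) :
    (dickson 1 a (2 * q + 1)).eval x =
      ∑ k ∈ range (q + 1), (cOdd (2 * q + 1) k : F) * a ^ (q - k) * x ^ (2 * k + 1) := by
  rw [dickson_one_add_one, eval_sub, eval_mul, eval_mul, eval_X, eval_ofNat,
    dickson_two_eval a x (N := q + 1) (by omega), dickson_two_eval a x (N := q + 1) (by omega),
    mul_sum, mul_sum, ← sum_sub_distrib, ← sum_range_reflect]
  refine sum_congr rfl fun k hk => ?_
  have hk : k ≤ q := Nat.lt_succ_iff.mp (mem_range.mp hk)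
  rw [cOdd_eq hk, show q + 1 - 1 - k = q - k by omega,
    show 2 * q + 1 - (q - k) = q + 1 + k by omega,
    show 2 * q + 1 - 2 * (q - k) = 2 * k + 1 by omega, show 2 * q - (q - k) = q + k by omega,
    show 2 * q - 2 * (q - k) = 2 * k by omega]
  push_cast
  ring

theorem sum_cOdd_div_pow_mul_pow {F : Type*} [Field F] [CharZero F] {z : F} (hz : z ≠ 0)
    (q : ℕ) (u : F) :
    ∑ k ∈ range (q + 1), (cOdd (2 * q + 1) k : F) / (z ^ (2 * q + 1)) ^ k * u ^ (2 * k + 1)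
      = (dickson 1 z (2 * q + 1)).eval (u / z ^ q) := by
  rw [dickson_one_eval_two_mul_add_one]
  refine sum_congr rfl fun k hk => ?_
  have hk : k ≤ q := Nat.lt_succ_iff.mp (mem_range.mp hk)
  have hpow : (z ^ q) ^ (2 * k + 1) = z ^ (q - k) * (z ^ (2 * q + 1)) ^ k := by
    rw [← pow_mul, ← pow_mul, ← pow_add]
    congr 1
    zify [hk]
    ring
  rw [div_pow, hpow]
  field_simp

section AddDiv

variable {L : Type*} [Field L]

theorem eq_or_eq_div_of_add_div_eq {y y' z : L} (hy : y ≠ 0) (hy' : y' ≠ 0)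
    (h : y + z / y = y' + z / y') : y = y' ∨ y = z / y' := by
  have hfac : (y - y') * (y * y' - z) = 0 := by
    field_simp at h
    linear_combination h
  rcases mul_eq_zero.mp hfac with h | h
  · exact Or.inl (sub_eq_zero.mp h)
  · exact Or.inr (by field_simp; linear_combination h)

theorem exists_add_div_eq [IsAlgClosed L] {z : L} (hz : z ≠ 0) (x : L) :
    ∃ y, y ≠ 0 ∧ y + z / y = x := by
  have hdeg : (X ^ 2 - C x * X + C z).degree = 2 := by compute_degree!
  obtain ⟨y, hy⟩ := IsAlgClosed.exists_root _ (hdeg ▸ two_ne_zero)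
  simp only [IsRoot, eval_add, eval_sub, eval_pow, eval_mul, eval_X, eval_C] at hy
  have hy0 : y ≠ 0 := by rintro rfl; exact hz (by simpa using hy)
  exact ⟨y, hy0, by field_simp; linear_combination hy⟩

theorem existsUnique_pow_eq_and_eq_add_div [IsAlgClosed L] {n : ℕ} (hn : n ≠ 0) {z x α β : L}
    (hz : z ≠ 0) (hαβ : α ≠ β) (hsum : (dickson 1 z n).eval x = α + β)
    (hprod : z ^ n = α * β) :
    ∃! y, y ^ n = α ∧ x = y + z / y := by
  have hα : α ≠ 0 := left_ne_zero_of_mul (hprod ▸ pow_ne_zero n hz)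
  have hβ : β ≠ 0 := right_ne_zero_of_mul (hprod ▸ pow_ne_zero n hz)
  refine existsUnique_of_exists_of_unique ?_ ?_
  · obtain ⟨y, hy0, rfl⟩ := exists_add_div_eq hz x
    have hpow_sum : y ^ n + (z / y) ^ n = α + β := by
      rw [← hsum, ← dickson_one_eval_add, mul_div_cancel₀ _ hy0]
    have hpow_prod : y ^ n * (z / y) ^ n = α * β := by
      rw [← mul_pow, mul_div_cancel₀ _ hy0, hprod]
    have hroots : (y ^ n - α) * (y ^ n - β) = 0 := by
      linear_combination y ^ n * hpow_sum - hpow_prod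
    rcases mul_eq_zero.mp hroots with h | h
    · exact ⟨y, sub_eq_zero.mp h, rfl⟩
    · refine ⟨z / y, ?_, by field_simp; ring⟩
      have h : y ^ n = β := sub_eq_zero.mp h
      rw [h] at hpow_prod
      exact mul_left_cancel₀ hβ (by linear_combination hpow_prod)
  · rintro y y' ⟨hy, hxy⟩ ⟨hy', hxy'⟩
    have hy0 : y ≠ 0 := ne_zero_pow hn (hy ▸ hα)
    have hy'0 : y' ≠ 0 := ne_zero_pow hn (hy' ▸ hα)
    refine (eq_or_eq_div_of_add_div_eq hy0 hy'0 (hxy.symm.trans hxy')).resolve_right ?_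
    rintro rfl
    apply hαβ
    rw [div_pow, hy', hprod, mul_div_cancel_left₀ _ hα] at hy
    exact hy.symm

end AddDiv

theorem unique_root_above_general (K : Type*) [Field K] [CharZero K]
    (p : ℕ) (hp : Odd p)
    (d R : K)
    (sqrtR : AlgebraicClosure K)
    (hsq : sqrtR ^ 2 = algebraMap K (AlgebraicClosure K) R)
    (hsR : sqrtR ∉ Set.range (algebraMap K (AlgebraicClosure K)))
    (z : AlgebraicClosure K)
    (hz : z ^ p = algebraMap K (AlgebraicClosure K) (d ^ 2 - R))
    (u : AlgebraicClosure K)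
    (hu : algebraMap K (AlgebraicClosure K) ((d ^ 2 - R) ^ ((p - 1) / 2)) *
        (∑ k ∈ Finset.range ((p - 1) / 2 + 1),
          ((cOdd p k : AlgebraicClosure K) /
              algebraMap K (AlgebraicClosure K) (d ^ 2 - R) ^ k) * u ^ (2 * k + 1))
      - 2 * algebraMap K (AlgebraicClosure K) d *
          algebraMap K (AlgebraicClosure K) ((d ^ 2 - R) ^ ((p - 1) / 2)) = 0) :
    ∃! y : AlgebraicClosure K,
      y ^ p = algebraMap K (AlgebraicClosure K) d + sqrtR ∧
        u = z ^ ((p - 1) / 2) * (y + z / y) := by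
  obtain ⟨q, rfl⟩ := hp
  rw [show (2 * q + 1 - 1) / 2 = q by omega] at hu ⊢
  set φ := algebraMap K (AlgebraicClosure K)
  have hsqrt_ne : ∀ c : K, sqrtR ≠ φ c := fun c h => hsR ⟨c, h.symm⟩
  have hD : φ (d ^ 2 - R) = (φ d + sqrtR) * (φ d - sqrtR) := by
    rw [map_sub, map_pow, ← hsq]
    ring
  have hD0 : φ (d ^ 2 - R) ≠ 0 := by
    rw [hD]
    refine mul_ne_zero (fun h => hsqrt_ne (-d) ?_) (sub_ne_zero.mpr (hsqrt_ne d).symm)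
    rw [map_neg]
    linear_combination h
  have hz0 : z ≠ 0 := by
    rintro rfl
    exact hD0 (by rw [← hz, zero_pow (by omega)])
  have hsum : (dickson 1 z (2 * q + 1)).eval (u / z ^ q)
      = (φ d + sqrtR) + (φ d - sqrtR) := by
    rw [map_pow, ← hz] at hu
    rw [← sub_eq_zero, ← mul_right_inj' (pow_ne_zero q (hz ▸ hD0)),
      ← sum_cOdd_div_pow_mul_pow hz0]
    linear_combination hu
  have hαβ : φ d + sqrtR ≠ φ d - sqrtR := fun h => hsqrt_ne 0 (by
    rw [map_zero]
    linear_combination h / 2)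
  refine (existsUnique_congr fun y => ?_).mp
    (existsUnique_pow_eq_and_eq_add_div (by omega) hz0 hαβ hsum (hz.trans hD))
  rw [div_eq_iff (pow_ne_zero q hz0), mul_comm (y + z / y)]

theorem unique_root_above (K : Type*) [Field K] [CharZero K]
    (p : ℕ) (hp : Odd p) (hp3 : 3 ≤ p)
    (d R : K) (hd : d ≠ 0) (hR : R ≠ 0)
    (sqrtR : AlgebraicClosure K)
    (hsq : sqrtR ^ 2 = algebraMap K (AlgebraicClosure K) R)
    (hsR : sqrtR ∉ Set.range (algebraMap K (AlgebraicClosure K)))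
    (hg : Irreducible (((X ^ p - Polynomial.C d) ^ 2 - Polynomial.C R : K[X])))
    (z : AlgebraicClosure K)
    (hz : z ^ p = algebraMap K (AlgebraicClosure K) (d ^ 2 - R))
    (u : AlgebraicClosure K)
    (hu : algebraMap K (AlgebraicClosure K) ((d ^ 2 - R) ^ ((p - 1) / 2)) *
        (∑ k ∈ Finset.range ((p - 1) / 2 + 1),
          ((cOdd p k : AlgebraicClosure K) /
              algebraMap K (AlgebraicClosure K) (d ^ 2 - R) ^ k) * u ^ (2 * k + 1))
      - 2 * algebraMap K (AlgebraicClosure K) d *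
          algebraMap K (AlgebraicClosure K) ((d ^ 2 - R) ^ ((p - 1) / 2)) = 0) :
    ∃! y : AlgebraicClosure K,
      y ^ p = algebraMap K (AlgebraicClosure K) d + sqrtR ∧
        u = z ^ ((p - 1) / 2) * (y + z / y) :=
  unique_root_above_general K p hp d R sqrtR hsq hsR z hz u hu
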